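/- arXiv:1612.08322 — 5 statements merged into one kernel-verified Lean document; each statement's English description precedes it below -/
import Mathlib

section
/- Let a and b be nonzero quaternions. If both ab and ba are complex numbers (i.e., have zero j-part and zero k-part), then one of the following holds: (i) a and b are both complex numbers; (ii) a = a*·j and b = b*·j for some complex numbers a*, b*; or (iii) b = r·conj(a) for some nonzero real number r. -/
local notation "ℍ" => Quaternion ℝ

/-- A quaternion is a complex number if its j-part and k-part vanish. -/
def IsComplexQ (q : ℍ) : Prop := q.imJ = 0 ∧ q.imK = 0

/-- The quaternion j. -/
def qj : ℍ := ⟨0, 0, 1, 0⟩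

/-!
Write `a = α + β j` and `b = γ + δ j` with `α β γ δ : ℂ`. Since `j z = conj z j` and `j² = -1`,
`ab` and `ba` are complex exactly when `α δ + β conj γ = 0` and `γ β + δ conj α = 0`.
If `α` and `β` are both nonzero, these two equations force `α γ` to be real, so that
`γ = r conj α` and `δ = -r β` for a real `r`, which says `b = r conj a`.
-/

open ComplexConjugate

theorem Complex.mul_add_mul_conj_eq_zero_cases {α β γ δ : ℂ} (hαβ : α ≠ 0 ∨ β ≠ 0)
    (h₁ : α * δ + β * conj γ = 0) (h₂ : γ * β + δ * conj α = 0) :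
    (β = 0 ∧ δ = 0) ∨ (α = 0 ∧ γ = 0) ∨ ∃ r : ℝ, γ = r * conj α ∧ δ = -(r * β) := by
  rcases eq_or_ne β 0 with rfl | hβ
  · have hα : α ≠ 0 := by simpa using hαβ
    exact Or.inl ⟨rfl, by simpa [hα] using h₁⟩
  rcases eq_or_ne α 0 with rfl | hα
  · exact Or.inr (Or.inl ⟨rfl, by simpa [hβ] using h₁⟩)
  right; right
  have hreal : conj (α * γ) = α * γ := by
    have : β * (α * γ - conj (α * γ)) = 0 := by
      rw [map_mul]; linear_combination α * h₂ - conj α * h₁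
    exact (sub_eq_zero.mp ((mul_eq_zero.mp this).resolve_left hβ)).symm
  obtain ⟨s, hs⟩ := Complex.conj_eq_iff_real.mp hreal
  have hγ : γ = ↑(s / Complex.normSq α) * conj α := by
    rw [Complex.ofReal_div, ← Complex.mul_conj, ← hs]
    have : conj α ≠ 0 := (map_ne_zero _).mpr hα
    field_simp
  refine ⟨s / Complex.normSq α, hγ, mul_left_cancel₀ hα ?_⟩
  rw [hγ, map_mul, Complex.conj_ofReal, Complex.conj_conj] at h₁
  linear_combination h₁

@[simp] theorem re_qj : qj.re = 0 := rfl
@[simp] theorem imI_qj : qj.imI = 0 := rfl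
@[simp] theorem imJ_qj : qj.imJ = 1 := rfl
@[simp] theorem imK_qj : qj.imK = 0 := rfl

theorem exists_eq_coeComplex_add_mul_qj (q : ℍ) : ∃ α β : ℂ, q = (α : ℍ) + (β : ℍ) * qj :=
  ⟨⟨q.re, q.imI⟩, ⟨q.imJ, q.imK⟩, by ext <;> simp⟩

theorem coeComplex_add_mul_qj_eq_zero_iff {α β : ℂ} :
    (α : ℍ) + (β : ℍ) * qj = 0 ↔ α = 0 ∧ β = 0 := by
  simp [Quaternion.ext_iff, Complex.ext_iff, and_assoc, Quaternion.re_zero,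
    Quaternion.imI_zero, Quaternion.imJ_zero, Quaternion.imK_zero]

theorem coeComplex_add_mul_qj_mul (α β γ δ : ℂ) :
    ((α : ℍ) + (β : ℍ) * qj) * ((γ : ℍ) + (δ : ℍ) * qj) =
      ((α * γ - β * conj δ : ℂ) : ℍ) + ((α * δ + β * conj γ : ℂ) : ℍ) * qj := by
  ext <;> simp <;> ring

theorem star_coeComplex_add_mul_qj (α β : ℂ) :
    star ((α : ℍ) + (β : ℍ) * qj) = ((conj α : ℂ) : ℍ) - (β : ℍ) * qj := by
  ext <;> simp

theorem isComplexQ_coeComplex (z : ℂ) : IsComplexQ z :=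
  ⟨Quaternion.imJ_coeComplex z, Quaternion.imK_coeComplex z⟩

theorem isComplexQ_coeComplex_add_mul_qj_iff {α β : ℂ} :
    IsComplexQ ((α : ℍ) + (β : ℍ) * qj) ↔ β = 0 := by
  simp [IsComplexQ, Complex.ext_iff]

theorem stmt0 (a b : ℍ) (ha : a ≠ 0) (hb : b ≠ 0)
    (hab : IsComplexQ (a * b)) (hba : IsComplexQ (b * a)) :
    (IsComplexQ a ∧ IsComplexQ b) ∨
    (∃ as bs : ℍ, IsComplexQ as ∧ IsComplexQ bs ∧ a = as * qj ∧ b = bs * qj) ∨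
    (∃ r : ℝ, r ≠ 0 ∧ b = r • star a) := by
  obtain ⟨α, β, rfl⟩ := exists_eq_coeComplex_add_mul_qj a
  obtain ⟨γ, δ, rfl⟩ := exists_eq_coeComplex_add_mul_qj b
  rw [coeComplex_add_mul_qj_mul, isComplexQ_coeComplex_add_mul_qj_iff] at hab hba
  rw [Ne, coeComplex_add_mul_qj_eq_zero_iff, not_and_or] at ha
  rcases Complex.mul_add_mul_conj_eq_zero_cases ha hab hba with
    ⟨rfl, rfl⟩ | ⟨rfl, rfl⟩ | ⟨r, rfl, rfl⟩
  · left
    simp [isComplexQ_coeComplex]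
  · right; left
    exact ⟨β, δ, isComplexQ_coeComplex β, isComplexQ_coeComplex δ, by simp, by simp⟩
  · right; right
    refine ⟨r, fun hr => hb ?_, ?_⟩
    · simp [hr]
    · rw [star_coeComplex_add_mul_qj]
      ext <;> simp
end

section
/- Let λ > 1 be real and let μ, ν be unit quaternions. If for every positive integer n the quaternion (λⁿ + λ⁻ⁿ)μⁿ + νⁿ is a complex number, then μ and ν are both complex numbers (hence lie in U(1)). -/
/-!
For a quaternion `q` of norm one, `q ^ 2 = 2 q.re • q - 1` and
`q ^ 3 = (4 q.re ^ 2 - 1) • q - 2 q.re`, so the `(j, k)`-part of `q ^ n` is a real multiple of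
that of `q` for `n = 1, 2, 3`. Writing `e = λ + λ⁻¹ > 2`, `a = μ.re`, `c = ν.re`, the
`(j, k)`-parts `w` of `μ` and `z` of `ν` therefore satisfy
`e w + z = 0`, `(e² - 2) 2a w + 2c z = 0`, `(e³ - 3e)(4a² - 1) w + (4c² - 1) z = 0`.
If `w ≠ 0`, eliminating `z` gives `(e² - 4)(4a² - e²) = 0`, impossible as `e > 2 ≥ 2|a|`.
-/

local notation "ℍ" => Quaternion ℝ

section Field

variable {K : Type*} [Field K]

theorem sq_add_inv_sq {l : K} (hl : l ≠ 0) : l ^ 2 + l⁻¹ ^ 2 = (l + l⁻¹) ^ 2 - 2 := by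
  field_simp; ring

theorem pow_three_add_inv_pow_three {l : K} (hl : l ≠ 0) :
    l ^ 3 + l⁻¹ ^ 3 = (l + l⁻¹) ^ 3 - 3 * (l + l⁻¹) := by
  field_simp; ring

end Field

section LinearOrderedField

variable {K : Type*} [Field K] [LinearOrder K] [IsStrictOrderedRing K]

theorem two_lt_add_inv {l : K} (hl : 1 < l) : 2 < l + l⁻¹ := by
  have hl0 : 0 < l := zero_lt_one.trans hl
  have key : (l + l⁻¹ - 2) * l = (l - 1) ^ 2 := by field_simp; ring
  have : 0 < (l + l⁻¹ - 2) * l := key ▸ pow_pos (sub_pos.2 hl) 2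
  linarith [pos_of_mul_pos_left this hl0.le]

variable {V : Type*} [AddCommGroup V] [Module K V]

theorem eq_zero_of_smul_relations {e a c : K} (he : 2 < e) (ha : a ^ 2 ≤ 1) {w z : V}
    (h1 : e • w + z = 0)
    (h2 : (e ^ 2 - 2) • (2 * a) • w + (2 * c) • z = 0)
    (h3 : (e ^ 3 - 3 * e) • (4 * a ^ 2 - 1) • w + (4 * c ^ 2 - 1) • z = 0) :
    w = 0 := by
  by_contra hw
  have hz : z = -(e • w) := eq_neg_of_add_eq_zero_right h1
  subst hz
  have hA : (e ^ 2 - 2) * a = c * e := by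
    have : ((e ^ 2 - 2) * (2 * a) - 2 * c * e) • w = 0 := by
      rw [← h2]; module
    linear_combination (smul_eq_zero.1 this).resolve_right hw / 2
  have hB : (e ^ 3 - 3 * e) * (4 * a ^ 2 - 1) = (4 * c ^ 2 - 1) * e := by
    have : ((e ^ 3 - 3 * e) * (4 * a ^ 2 - 1) - (4 * c ^ 2 - 1) * e) • w = 0 := by
      rw [← h3]; module
    linear_combination (smul_eq_zero.1 this).resolve_right hw
  have hD : (e ^ 2 - 4) * (4 * a ^ 2 - e ^ 2) = 0 := by
    linear_combination e * hB - 4 * ((e ^ 2 - 2) * a + c * e) * hA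
  rcases mul_eq_zero.1 hD with h | h <;> nlinarith

end LinearOrderedField

namespace Quaternion

section CommRing

variable {R : Type*} [CommRing R] (q : ℍ[R])

theorem sq_eq_two_re_smul_sub_normSq : q ^ 2 = (2 * q.re) • q - ((normSq q : R) : ℍ[R]) := by
  ext <;> simp [sq, normSq_def'] <;> ring

theorem pow_three_eq_smul_sub_coe :
    q ^ 3 = (4 * q.re ^ 2 - normSq q) • q - ((2 * q.re * normSq q : R) : ℍ[R]) := by
  ext <;> simp [pow_succ, normSq_def'] <;> ring

variable {M : Type*} [AddCommGroup M] [Module R M] {f : ℍ[R] →ₗ[R] M}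

theorem map_sq_eq_smul (hf : ∀ r : R, f r = 0) : f (q ^ 2) = (2 * q.re) • f q := by
  rw [sq_eq_two_re_smul_sub_normSq, map_sub, map_smul, hf, sub_zero]

theorem map_pow_three_eq_smul (hf : ∀ r : R, f r = 0) :
    f (q ^ 3) = (4 * q.re ^ 2 - normSq q) • f q := by
  rw [pow_three_eq_smul_sub_coe, map_sub, map_smul, hf, sub_zero]

def imJK : ℍ[R] →ₗ[R] R × R :=
  (QuaternionAlgebra.imJₗ _ _ _).prod (QuaternionAlgebra.imKₗ _ _ _)

theorem imJK_coe (r : R) : imJK (r : ℍ[R]) = 0 :=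
  rfl

end CommRing

theorem re_sq_le_normSq {R : Type*} [CommRing R] [LinearOrder R] [IsStrictOrderedRing R]
    (q : ℍ[R]) : q.re ^ 2 ≤ normSq q := by
  rw [normSq_def']
  nlinarith [sq_nonneg q.imI, sq_nonneg q.imJ, sq_nonneg q.imK]

theorem imJK_eq_zero_iff {q : ℍ[ℝ]} : imJK q = 0 ↔ IsComplexQ q :=
  Prod.mk_eq_zero

end Quaternion

open Quaternion (normSq normSq_eq_norm_mul_self imJK imJK_coe imJK_eq_zero_iff map_sq_eq_smul
  map_pow_three_eq_smul re_sq_le_normSq)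

theorem stmt6 (l : ℝ) (hl : 1 < l) (μ ν : ℍ) (hμ : ‖μ‖ = 1) (hν : ‖ν‖ = 1)
    (h : ∀ n : ℕ, 0 < n → IsComplexQ ((l ^ n + l⁻¹ ^ n) • μ ^ n + ν ^ n)) :
    IsComplexQ μ ∧ IsComplexQ ν := by
  have hμ1 : normSq μ = 1 := by rw [normSq_eq_norm_mul_self, hμ, mul_one]
  have hν1 : normSq ν = 1 := by rw [normSq_eq_norm_mul_self, hν, mul_one]
  have hl0 : l ≠ 0 := (zero_lt_one.trans hl).ne'
  have hrel (n : ℕ) (hn : 0 < n) :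
      (l ^ n + l⁻¹ ^ n) • imJK (μ ^ n) + imJK (ν ^ n) = 0 := by
    simpa using imJK_eq_zero_iff.2 (h n hn)
  have h1 := hrel 1 one_pos
  have h2 := hrel 2 two_pos
  have h3 := hrel 3 three_pos
  simp only [pow_one] at h1
  rw [sq_add_inv_sq hl0, map_sq_eq_smul _ imJK_coe, map_sq_eq_smul _ imJK_coe] at h2
  rw [pow_three_add_inv_pow_three hl0, map_pow_three_eq_smul _ imJK_coe,
    map_pow_three_eq_smul _ imJK_coe, hμ1, hν1] at h3
  have hre : μ.re ^ 2 ≤ 1 := by simpa [hμ1] using re_sq_le_normSq μ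
  have hμJK : imJK μ = 0 := eq_zero_of_smul_relations (two_lt_add_inv hl) hre h1 h2 h3
  have hνJK : imJK ν = 0 := by simpa [hμJK] using h1
  exact ⟨imJK_eq_zero_iff.1 hμJK, imJK_eq_zero_iff.1 hνJK⟩
end

section
/- Let λ > 1, θ ∈ ℝ, and let a, e, l be quaternions. Suppose a + e + l, λe^{iθ}a + e^{−2iθ}e + (1/λ)e^{iθ}l, and (1/λ)e^{−iθ}a + e^{2iθ}e + λe^{−iθ}l are all complex numbers. Then a, e, and l are complex numbers. -/
local notation "ℍ" => Quaternion ℝ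

/-- `e^{iθ}` as a quaternion. -/
noncomputable def eI (θ : ℝ) : ℍ := ⟨Real.cos θ, Real.sin θ, 0, 0⟩

/-!
Write a quaternion as `q = z + w j` with `z, w ∈ ℂ` (here `w = jkPart q`). Since `c (w j) = (c w) j`
for `c ∈ ℂ`, the hypotheses say that the `j`-coordinates of `a`, `e`, `l` solve a homogeneous complex
linear system whose matrix, with `u = e^{iθ}`, is `coeffMatrix λ u`. Its determinant
`(λ - λ⁻¹)(u³ - λ)(u³ - λ⁻¹)/u³` is nonzero because `|u³| = 1` while `|λ|, |λ⁻¹| ≠ 1`, so the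
solution is zero.
-/

open Complex Matrix

section CoeffMatrix

variable {K : Type*}

def coeffMatrix [Field K] (lam u : K) : Matrix (Fin 3) (Fin 3) K :=
  !![1, 1, 1;
    lam * u, u⁻¹ ^ 2, lam⁻¹ * u;
    lam⁻¹ * u⁻¹, u ^ 2, lam * u⁻¹]

theorem det_coeffMatrix [Field K] {lam u : K} (hlam : lam ≠ 0) (hu : u ≠ 0) :
    (coeffMatrix lam u).det = (lam - lam⁻¹) * (u ^ 3 - lam) * (u ^ 3 - lam⁻¹) / u ^ 3 := by
  simp only [coeffMatrix, det_fin_three, of_apply, cons_val', cons_val_zero, cons_val_one, cons_val,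
    cons_val_fin_one]
  field_simp
  ring

theorem det_coeffMatrix_ne_zero [NormedField K] {lam u : K} (hlam₀ : lam ≠ 0) (hlam : ‖lam‖ ≠ 1)
    (hu : ‖u‖ = 1) : (coeffMatrix lam u).det ≠ 0 := by
  have hu₀ : u ≠ 0 := norm_ne_zero_iff.mp (by simp [hu])
  have hu3 : ‖u ^ 3‖ = 1 := by simp [hu]
  have hlam_inv : ‖lam⁻¹‖ ≠ 1 := by simpa [norm_inv] using hlam
  rw [det_coeffMatrix hlam₀ hu₀]
  refine div_ne_zero (mul_ne_zero (mul_ne_zero ?_ ?_) ?_) (pow_ne_zero 3 hu₀)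
  · intro h
    have hsq : lam ^ 2 = 1 := by rw [sq, mul_eq_one_iff_eq_inv₀ hlam₀]; exact sub_eq_zero.mp h
    exact hlam ((pow_eq_one_iff_of_nonneg (norm_nonneg _) two_ne_zero).1
      (by rw [← norm_pow, hsq, norm_one]))
  · exact fun h => hlam (by rw [← sub_eq_zero.mp h, hu3])
  · exact fun h => hlam_inv (by rw [← sub_eq_zero.mp h, hu3])

end CoeffMatrix

def jkPart (q : ℍ) : ℂ := ⟨q.imJ, q.imK⟩

theorem isComplexQ_iff_jkPart_eq_zero (q : ℍ) : IsComplexQ q ↔ jkPart q = 0 := by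
  simp [IsComplexQ, jkPart, Complex.ext_iff]

theorem jkPart_add (p q : ℍ) : jkPart (p + q) = jkPart p + jkPart q := by
  apply Complex.ext <;> simp [jkPart]

theorem jkPart_smul (r : ℝ) (q : ℍ) : jkPart (r • q) = r * jkPart q := by
  apply Complex.ext <;> simp [jkPart]

theorem jkPart_eI_mul (θ : ℝ) (q : ℍ) : jkPart (eI θ * q) = exp (θ * I) * jkPart q := by
  rw [exp_mul_I, ← ofReal_cos, ← ofReal_sin]
  apply Complex.ext <;> simp only [jkPart, Quaternion.imJ_mul, Quaternion.imK_mul] <;>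
    simp [eI, cos_ofReal_re, sin_ofReal_re]

theorem stmt7 (lam θ : ℝ) (hl : 1 < lam) (a e l : ℍ)
    (h1 : IsComplexQ (a + e + l))
    (h2 : IsComplexQ ((lam • eI θ) * a + eI (-2 * θ) * e + ((1 / lam) • eI θ) * l))
    (h3 : IsComplexQ (((1 / lam) • eI (-θ)) * a + eI (2 * θ) * e + (lam • eI (-θ)) * l)) :
    IsComplexQ a ∧ IsComplexQ e ∧ IsComplexQ l := by
  set u := exp (θ * I)
  have hsys : coeffMatrix (lam : ℂ) u *ᵥ ![jkPart a, jkPart e, jkPart l] = 0 := by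
    simp only [isComplexQ_iff_jkPart_eq_zero, jkPart_add, smul_mul_assoc, jkPart_smul,
      jkPart_eI_mul] at h1 h2 h3
    have hexp_neg : exp (↑(-θ) * I) = u⁻¹ := by rw [← exp_neg]; congr 1; push_cast; ring
    have hexp_two : exp (↑(2 * θ) * I) = u ^ 2 := by rw [← exp_nat_mul]; congr 1; push_cast; ring
    have hexp_neg_two : exp (↑(-2 * θ) * I) = u⁻¹ ^ 2 := by
      rw [← hexp_neg, ← exp_nat_mul]; congr 1; push_cast; ring
    rw [hexp_neg_two] at h2
    rw [hexp_neg, hexp_two] at h3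
    push_cast at h2 h3
    ext i
    fin_cases i <;>
      simp only [coeffMatrix, mulVec, dotProduct, Fin.sum_univ_three, Fin.zero_eta, Fin.mk_one,
        Fin.reduceFinMk, of_apply, cons_val', cons_val_zero, cons_val_one, cons_val,
        cons_val_fin_one, Pi.zero_apply]
    · linear_combination h1
    · linear_combination h2
    · linear_combination h3
  have hdet : (coeffMatrix (lam : ℂ) u).det ≠ 0 :=
    det_coeffMatrix_ne_zero (by exact_mod_cast (zero_lt_one.trans hl).ne')
      (by rw [norm_real, Real.norm_of_nonneg (by linarith)]; exact hl.ne')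
      (norm_exp_ofReal_mul_I θ)
  have hzero := eq_zero_of_mulVec_eq_zero hdet hsys
  simp only [isComplexQ_iff_jkPart_eq_zero]
  exact ⟨congrFun hzero 0, congrFun hzero 1, congrFun hzero 2⟩
end

section
/- Let b be a nonzero quaternion with b ∉ ℂ and b not of the form b*·j for complex b*, let a, c ∈ ℂ ⊂ ℍ and r₁, r₂ ∈ ℝ with the property that e := −conj(b)(r₂·conj(a) + r₁·conj(c))b / |b|² is a complex number. Then r₂·conj(a) + r₁·conj(c) is a real number. -/
local notation "ℍ" => Quaternion ℝ

theorem stmt11 (a c b : ℍ) (r1 r2 : ℝ)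
    (ha : IsComplexQ a) (hc : IsComplexQ c)
    (hb1 : ¬ (b.imJ = 0 ∧ b.imK = 0)) (hb2 : ¬ (b.re = 0 ∧ b.imI = 0))
    (he : IsComplexQ (-(‖b‖ ^ 2)⁻¹ • (star b * (r2 • star a + r1 • star c) * b))) :
    ∃ r : ℝ, r2 • star a + r1 • star c = (r : ℍ) := by
  obtain ⟨haJ, haK⟩ := ha
  obtain ⟨hcJ, hcK⟩ := hc
  obtain ⟨w, hw⟩ : ∃ w : ℍ, w = r2 • star a + r1 • star c := ⟨_, rfl⟩
  rw [← hw] at he ⊢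
  have hwJ : w.imJ = 0 := by
    simp [hw, Quaternion.imJ_add, Quaternion.imJ_smul, Quaternion.imJ_star, haJ, hcJ]
  have hwK : w.imK = 0 := by
    simp [hw, Quaternion.imK_add, Quaternion.imK_smul, Quaternion.imK_star, haK, hcK]
  -- b ≠ 0
  have hb0 : b ≠ 0 := by
    intro h; exact hb1 ⟨by simp [h, Quaternion.imJ_zero], by simp [h, Quaternion.imK_zero]⟩
  have hnorm : (‖b‖ ^ 2 : ℝ) ≠ 0 := pow_ne_zero 2 (norm_ne_zero_iff.mpr hb0)
  have hscal : (-(‖b‖ ^ 2)⁻¹ : ℝ) ≠ 0 := by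
    simp [hnorm]
  obtain ⟨heJ, heK⟩ := he
  have hJ : (star b * w * b).imJ = 0 := by
    have := heJ
    rw [Quaternion.imJ_smul, smul_eq_mul] at this
    exact (mul_eq_zero.mp this).resolve_left hscal
  have hK : (star b * w * b).imK = 0 := by
    have := heK
    rw [Quaternion.imK_smul, smul_eq_mul] at this
    exact (mul_eq_zero.mp this).resolve_left hscal
  -- expand components
  simp only [Quaternion.imJ_mul, Quaternion.imK_mul, Quaternion.re_mul, Quaternion.imI_mul,
    Quaternion.re_star, Quaternion.imI_star, Quaternion.imJ_star, Quaternion.imK_star,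
    hwJ, hwK] at hJ hK
  have hwI : w.imI = 0 := by
    by_contra hne
    have hX : b.imI * b.imJ - b.re * b.imK = 0 := by
      apply mul_left_cancel₀ hne
      nlinarith [hJ, hK]
    have hY : b.imI * b.imK + b.re * b.imJ = 0 := by
      apply mul_left_cancel₀ hne
      nlinarith [hJ, hK]
    have h1 : b.re * (b.imJ ^ 2 + b.imK ^ 2) = 0 := by linear_combination b.imJ * hY - b.imK * hX
    have h2 : b.imI * (b.imJ ^ 2 + b.imK ^ 2) = 0 := by linear_combination b.imJ * hX + b.imK * hY
    have hjk : b.imJ ^ 2 + b.imK ^ 2 ≠ 0 := by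
      intro h
      exact hb1 ⟨by nlinarith [sq_nonneg b.imJ, sq_nonneg b.imK],
        by nlinarith [sq_nonneg b.imJ, sq_nonneg b.imK]⟩
    exact hb2 ⟨(mul_eq_zero.mp h1).resolve_right hjk,
      (mul_eq_zero.mp h2).resolve_right hjk⟩
  refine ⟨w.re, ?_⟩
  apply Quaternion.ext <;> simp [hwI, hwJ, hwK]
end

section
/- Let z₁, z₂, z₃, z₄ ∈ ℂ, λ > 1, θ ∈ ℝ with θ not congruent to 0 modulo π/2, and let p, q, u, v be quaternions satisfying, for n = 1, 2, 3, 4: λⁿcos(2nθ)·p − λⁿsin(2nθ)·q + cos(nθ)·u + sin(nθ)·v = zₙ. Then p, q, u, v are all complex numbers. -/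
local notation "ℍ" => Quaternion ℝ

/-!
Each of the j- and k-components of the equations is a real system
`Re (μⁿ c + wⁿ d) = 0` (`n = 1, …, 4`) with `μ = λ e^{2iθ}`, `w = e^{iθ}`, `c = P + Qi` and
`d = U - Vi`. Since `2 Re z = z + z̄`, this is a Vandermonde system in the nodes `μ, μ̄, w, w̄`,
which are nonzero and pairwise distinct: `μ` and `w` are not real because `θ ∉ (π/2)ℤ`, and
`|μ| = λ ≠ 1 = |w|`. Hence `c = d = 0`.
-/

open Complex ComplexConjugate

theorem Matrix.eq_zero_of_forall_sum_mul_pow_succ_eq_zero {R : Type*} [CommRing R] [IsDomain R]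
    {n : ℕ} {x c : Fin n → R} (hx : Function.Injective x) (hx0 : ∀ j, x j ≠ 0)
    (h : ∀ i : Fin n, ∑ j, c j * x j ^ ((i : ℕ) + 1) = 0) : c = 0 := by
  have hxc : (fun j => c j * x j) = 0 :=
    Matrix.eq_zero_of_forall_pow_sum_mul_pow_eq_zero hx fun i => by
      simpa only [pow_succ', mul_assoc] using h i
  funext j
  exact (mul_eq_zero.1 (congrFun hxc j)).resolve_right (hx0 j)

theorem Complex.injective_vec_self_conj {a b : ℂ} (ha : a.im ≠ 0) (hb : b.im ≠ 0)
    (hab : ‖a‖ ≠ ‖b‖) :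
    Function.Injective ![a, conj a, b, conj b] := by
  have hne {z z' : ℂ} (h : ‖z'‖ ≠ ‖z‖) : z ≠ z' := fun e => h (congrArg _ e).symm
  simp only [Matrix.vecCons, Fin.cons_injective_iff, Set.mem_range, not_exists,
    Fin.forall_fin_succ, Fin.cons_zero, Fin.cons_succ, IsEmpty.forall_iff, and_true,
    Function.injective_of_subsingleton, conj_eq_iff_im]
  refine ⟨⟨ha, ?_, ?_⟩, ⟨?_, ?_⟩, hb⟩ <;> exact hne (by simpa using hab)

theorem eq_zero_of_re_pow_mul_add_pow_mul_eq_zero {μ w c d : ℂ} (hμ : μ.im ≠ 0)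
    (hw : w.im ≠ 0) (hμw : ‖μ‖ ≠ ‖w‖)
    (h : ∀ n : ℕ, 1 ≤ n → n ≤ 4 → (μ ^ n * c + w ^ n * d).re = 0) : c = 0 ∧ d = 0 := by
  have hne0 {z : ℂ} (hz : z.im ≠ 0) : z ≠ 0 := fun h0 => hz (by simp [h0])
  have hcoeff := Matrix.eq_zero_of_forall_sum_mul_pow_succ_eq_zero
    (x := ![μ, conj μ, w, conj w]) (c := ![c, conj c, d, conj d])
    (injective_vec_self_conj hμ hw hμw)
    (by intro j; fin_cases j <;> simp [hne0 hμ, hne0 hw])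
    fun i => by
      set z := μ ^ ((i : ℕ) + 1) * c + w ^ ((i : ℕ) + 1) * d
      have hsum : ∑ j, ![c, conj c, d, conj d] j * ![μ, conj μ, w, conj w] j ^ ((i : ℕ) + 1) =
          z + conj z := by
        simp only [z, Fin.sum_univ_four, Matrix.cons_val, map_add, map_mul, map_pow]
        ring
      rw [hsum, add_conj, h _ (by omega) (by omega)]
      simp
  exact ⟨congrFun hcoeff 0, congrFun hcoeff 2⟩

theorem Complex.re_ofReal_mul_exp_mul_I_pow_mul (r t : ℝ) (n : ℕ) (z : ℂ) :
    ((r * exp (t * I)) ^ n * z).re =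
      r ^ n * Real.cos (n * t) * z.re - r ^ n * Real.sin (n * t) * z.im := by
  have hpow : (r * exp (t * I)) ^ n = ((r ^ n : ℝ) : ℂ) * exp ((n * t : ℝ) * I) := by
    rw [mul_pow, ← exp_nat_mul]
    push_cast
    ring_nf
  rw [hpow, mul_assoc, re_ofReal_mul, mul_re, exp_ofReal_mul_I_re, exp_ofReal_mul_I_im]
  ring

theorem eq_zero_of_forall_pow_cos_sin_combination_eq_zero {lam θ P Q U V : ℝ} (hlam0 : lam ≠ 0)
    (hlam1 : |lam| ≠ 1) (hθ : Real.sin (2 * θ) ≠ 0)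
    (h : ∀ n : ℕ, 1 ≤ n → n ≤ 4 →
      lam ^ n * Real.cos (2 * n * θ) * P - lam ^ n * Real.sin (2 * n * θ) * Q
        + Real.cos (n * θ) * U + Real.sin (n * θ) * V = 0) :
    P = 0 ∧ Q = 0 ∧ U = 0 ∧ V = 0 := by
  have hsin : Real.sin θ ≠ 0 := fun h0 => hθ (by rw [Real.sin_two_mul, h0]; ring)
  obtain ⟨hc, hd⟩ := eq_zero_of_re_pow_mul_add_pow_mul_eq_zero
    (μ := lam * exp ((2 * θ : ℝ) * I)) (w := (1 : ℝ) * exp (θ * I)) (c := ⟨P, Q⟩) (d := ⟨U, -V⟩)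
    (by rw [mul_im, ofReal_re, ofReal_im, exp_ofReal_mul_I_im, zero_mul, add_zero]
        exact mul_ne_zero hlam0 hθ)
    (by simpa [exp_ofReal_mul_I_im] using hsin)
    (by simpa only [norm_mul, norm_exp_ofReal_mul_I, norm_real, Real.norm_eq_abs, mul_one,
        abs_one] using hlam1)
    fun n h1 h4 => by
      rw [add_re, re_ofReal_mul_exp_mul_I_pow_mul, re_ofReal_mul_exp_mul_I_pow_mul, ← h n h1 h4]
      simp only [one_pow]
      ring_nf
  simp only [Complex.ext_iff, zero_re, zero_im, neg_eq_zero] at hc hd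
  exact ⟨hc.1, hc.2, hd.1, hd.2⟩

theorem stmt17 (lam θ : ℝ) (hlam : 1 < lam)
    (hθ : ∀ k : ℤ, θ ≠ k * (Real.pi / 2))
    (p q u v : ℍ)
    (h : ∀ n : ℕ, 1 ≤ n → n ≤ 4 →
      IsComplexQ ((lam ^ n * Real.cos (2 * n * θ)) • p - (lam ^ n * Real.sin (2 * n * θ)) • q
        + Real.cos (n * θ) • u + Real.sin (n * θ) • v)) :
    IsComplexQ p ∧ IsComplexQ q ∧ IsComplexQ u ∧ IsComplexQ v := by
  have hsin : Real.sin (2 * θ) ≠ 0 := fun h0 => by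
    obtain ⟨k, hk⟩ := Real.sin_eq_zero_iff.1 h0
    exact hθ k (by linarith)
  have hlam0 : lam ≠ 0 := by positivity
  have hlam1 : |lam| ≠ 1 := by rw [abs_of_pos (by positivity)]; exact hlam.ne'
  obtain ⟨hpJ, hqJ, huJ, hvJ⟩ := eq_zero_of_forall_pow_cos_sin_combination_eq_zero hlam0 hlam1 hsin
    fun n h1 h4 => by simpa [smul_eq_mul] using (h n h1 h4).1
  obtain ⟨hpK, hqK, huK, hvK⟩ := eq_zero_of_forall_pow_cos_sin_combination_eq_zero hlam0 hlam1 hsin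
    fun n h1 h4 => by simpa [smul_eq_mul] using (h n h1 h4).2
  exact ⟨⟨hpJ, hpK⟩, ⟨hqJ, hqK⟩, ⟨huJ, huK⟩, ⟨hvJ, hvK⟩⟩
end
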